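/- arXiv:2504.13704 — 2 statements merged into one kernel-verified Lean document; each statement's English description precedes it below -/
import Mathlib

section
/- Let R, B : [0,1] → ℝ² be curves and p ∈ ℝ² a point such that for all x, y ∈ [0,1] and both coordinates i ∈ {1,2}, (R(x))ᵢ ≤ pᵢ ≤ (B(y))ᵢ (i.e., the horizontal and vertical lines through p both separate R from B). Define R̄, B̄ : [0,1] → ℝ by R̄(x) = −‖R(x) − p‖₁ and B̄(y) = ‖B(y) − p‖₁. Then for all x, y ∈ [0,1], ‖R(x) − B(y)‖₁ = |B̄(y) − R̄(x)|, and consequently, for every δ ≥ 0, {(x,y) ∈ [0,1]² : ‖R(x) − B(y)‖₁ ≤ δ} = {(x,y) ∈ [0,1]² : |B̄(y) − R̄(x)| ≤ δ}. -/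
open Set

/-- The L1 distance on ℝ². -/
def l1dist (a b : ℝ × ℝ) : ℝ := |a.1 - b.1| + |a.2 - b.2|

/-- Two doubly-separated curves in the plane can be replaced by two curves in ℝ,
separated by the origin, realizing exactly the same pairwise distances, and hence
having the same δ-free space for every δ ≥ 0. -/
theorem doubly_separated_to_one_dimensional
    (R B : ℝ → ℝ × ℝ) (p : ℝ × ℝ)
    (hR : ∀ x ∈ Icc (0:ℝ) 1, (R x).1 ≤ p.1 ∧ (R x).2 ≤ p.2)
    (hB : ∀ y ∈ Icc (0:ℝ) 1, p.1 ≤ (B y).1 ∧ p.2 ≤ (B y).2)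
    (Rbar Bbar : ℝ → ℝ)
    (hRbar : ∀ x, Rbar x = -(l1dist (R x) p))
    (hBbar : ∀ y, Bbar y = l1dist (B y) p) :
    (∀ x ∈ Icc (0:ℝ) 1, ∀ y ∈ Icc (0:ℝ) 1,
      l1dist (R x) (B y) = |Bbar y - Rbar x|) ∧
    (∀ δ : ℝ, 0 ≤ δ →
      {q : ℝ × ℝ | q.1 ∈ Icc (0:ℝ) 1 ∧ q.2 ∈ Icc (0:ℝ) 1 ∧
        l1dist (R q.1) (B q.2) ≤ δ} =
      {q : ℝ × ℝ | q.1 ∈ Icc (0:ℝ) 1 ∧ q.2 ∈ Icc (0:ℝ) 1 ∧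
        |Bbar q.2 - Rbar q.1| ≤ δ}) := by
  have key : ∀ x ∈ Icc (0:ℝ) 1, ∀ y ∈ Icc (0:ℝ) 1,
      l1dist (R x) (B y) = |Bbar y - Rbar x| := by
    intro x hx y hy
    obtain ⟨h1, h2⟩ := hR x hx
    obtain ⟨h3, h4⟩ := hB y hy
    rw [hRbar, hBbar]
    simp only [l1dist]
    rw [abs_of_nonpos (by linarith : (R x).1 - (B y).1 ≤ 0),
        abs_of_nonpos (by linarith : (R x).2 - (B y).2 ≤ 0),
        abs_of_nonpos (by linarith : (R x).1 - p.1 ≤ 0),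
        abs_of_nonpos (by linarith : (R x).2 - p.2 ≤ 0),
        abs_of_nonneg (by linarith : (0:ℝ) ≤ (B y).1 - p.1),
        abs_of_nonneg (by linarith : (0:ℝ) ≤ (B y).2 - p.2)]
    rw [abs_of_nonneg (by linarith)]
    ring
  refine ⟨key, fun δ hδ => ?_⟩
  ext q
  simp only [mem_setOf_eq]
  constructor
  · rintro ⟨h1, h2, h3⟩; exact ⟨h1, h2, by rw [← key q.1 h1 q.2 h2]; exact h3⟩
  · rintro ⟨h1, h2, h3⟩; exact ⟨h1, h2, by rw [key q.1 h1 q.2 h2]; exact h3⟩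
end

section
/- Let R, B : [0,1] → ℝ² be affine maps (line segments), let δ ≥ 0, and let s = (x_s, y_s) ∈ [0,1]² be a point of the δ-free space of R and B with respect to the L1 distance. Then a point t = (x_t, y_t) ∈ [0,1]² is δ-reachable from s if and only if t lies in the δ-free space and x_s ≤ x_t and y_s ≤ y_t. -/
open Set

/-- The δ-free space of two curves in the plane under the L1 distance. -/
def FreeSpaceL1 (R B : ℝ → ℝ × ℝ) (δ : ℝ) : Set (ℝ × ℝ) :=
  {q | q.1 ∈ Icc (0:ℝ) 1 ∧ q.2 ∈ Icc (0:ℝ) 1 ∧ l1dist (R q.1) (B q.2) ≤ δ}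

/-- `t` is δ-reachable from `s`: there is a bimonotone path in the δ-free space
from `s` to `t`. -/
def ReachableL1 (R B : ℝ → ℝ × ℝ) (δ : ℝ) (s t : ℝ × ℝ) : Prop :=
  ∃ γ : ℝ → ℝ × ℝ, ContinuousOn γ (Icc 0 1) ∧
    MonotoneOn (fun u => (γ u).1) (Icc 0 1) ∧
    MonotoneOn (fun u => (γ u).2) (Icc 0 1) ∧
    γ 0 = s ∧ γ 1 = t ∧ ∀ u ∈ Icc (0:ℝ) 1, γ u ∈ FreeSpaceL1 R B δ

/-- convexity of the free-space distance along a segment -/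
lemma l1_convex_key (R B : ℝ → ℝ × ℝ)
    (hR : ∀ u : ℝ, R u = (1 - u) • R 0 + u • R 1)
    (hB : ∀ u : ℝ, B u = (1 - u) • B 0 + u • B 1)
    (δ : ℝ) (x₁ y₁ x₂ y₂ u : ℝ) (hu0 : 0 ≤ u) (hu1 : u ≤ 1)
    (h1 : l1dist (R x₁) (B y₁) ≤ δ) (h2 : l1dist (R x₂) (B y₂) ≤ δ) :
    l1dist (R ((1-u)*x₁+u*x₂)) (B ((1-u)*y₁+u*y₂)) ≤ δ := by
  rw [hR x₁, hB y₁] at h1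
  rw [hR x₂, hB y₂] at h2
  rw [hR ((1-u)*x₁+u*x₂), hB ((1-u)*y₁+u*y₂)]
  simp only [l1dist, Prod.fst_add, Prod.snd_add, Prod.smul_fst, Prod.smul_snd,
    smul_eq_mul] at h1 h2 ⊢
  set A1 : ℝ := (1 - x₁) * (R 0).1 + x₁ * (R 1).1 - ((1 - y₁) * (B 0).1 + y₁ * (B 1).1) with hA1
  set A2 : ℝ := (1 - x₁) * (R 0).2 + x₁ * (R 1).2 - ((1 - y₁) * (B 0).2 + y₁ * (B 1).2) with hA2
  set C1 : ℝ := (1 - x₂) * (R 0).1 + x₂ * (R 1).1 - ((1 - y₂) * (B 0).1 + y₂ * (B 1).1) with hC1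
  set C2 : ℝ := (1 - x₂) * (R 0).2 + x₂ * (R 1).2 - ((1 - y₂) * (B 0).2 + y₂ * (B 1).2) with hC2
  have e1 : (1 - ((1-u)*x₁+u*x₂)) * (R 0).1 + ((1-u)*x₁+u*x₂) * (R 1).1 -
      ((1 - ((1-u)*y₁+u*y₂)) * (B 0).1 + ((1-u)*y₁+u*y₂) * (B 1).1)
      = (1-u) * A1 + u * C1 := by rw [hA1, hC1]; ring
  have e2 : (1 - ((1-u)*x₁+u*x₂)) * (R 0).2 + ((1-u)*x₁+u*x₂) * (R 1).2 -
      ((1 - ((1-u)*y₁+u*y₂)) * (B 0).2 + ((1-u)*y₁+u*y₂) * (B 1).2)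
      = (1-u) * A2 + u * C2 := by rw [hA2, hC2]; ring
  rw [e1, e2]
  have b1 : |(1-u) * A1 + u * C1| ≤ (1-u) * |A1| + u * |C1| := by
    calc |(1-u) * A1 + u * C1| ≤ |(1-u) * A1| + |u * C1| := abs_add_le _ _
    _ = (1-u) * |A1| + u * |C1| := by
        rw [abs_mul, abs_mul, abs_of_nonneg hu0, abs_of_nonneg (by linarith : (0:ℝ) ≤ 1 - u)]
  have b2 : |(1-u) * A2 + u * C2| ≤ (1-u) * |A2| + u * |C2| := by
    calc |(1-u) * A2 + u * C2| ≤ |(1-u) * A2| + |u * C2| := abs_add_le _ _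
    _ = (1-u) * |A2| + u * |C2| := by
        rw [abs_mul, abs_mul, abs_of_nonneg hu0, abs_of_nonneg (by linarith : (0:ℝ) ≤ 1 - u)]
  nlinarith [abs_nonneg A1, abs_nonneg A2, abs_nonneg C1, abs_nonneg C2]

/-- For two line segments, a point `t` of the parameter space is δ-reachable from a
point `s` of the δ-free space if and only if `t` lies in the δ-free space above and
to the right of `s`. -/
theorem reachable_iff_freeSpace_of_segments
    (R B : ℝ → ℝ × ℝ)
    (hR : ∀ u : ℝ, R u = (1 - u) • R 0 + u • R 1)
    (hB : ∀ u : ℝ, B u = (1 - u) • B 0 + u • B 1)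
    (δ : ℝ) (hδ : 0 ≤ δ)
    (s t : ℝ × ℝ) (hs : s ∈ FreeSpaceL1 R B δ)
    (ht : t.1 ∈ Icc (0:ℝ) 1 ∧ t.2 ∈ Icc (0:ℝ) 1) :
    ReachableL1 R B δ s t ↔ (t ∈ FreeSpaceL1 R B δ ∧ s.1 ≤ t.1 ∧ s.2 ≤ t.2) := by
  constructor
  · rintro ⟨γ, hcont, hm1, hm2, h0, h1, hfree⟩
    have h01 : (0:ℝ) ∈ Icc (0:ℝ) 1 := ⟨le_refl 0, zero_le_one⟩
    have h11 : (1:ℝ) ∈ Icc (0:ℝ) 1 := ⟨zero_le_one, le_refl 1⟩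
    refine ⟨h1 ▸ hfree 1 h11, ?_, ?_⟩
    · have := hm1 h01 h11 zero_le_one
      simpa [h0, h1] using this
    · have := hm2 h01 h11 zero_le_one
      simpa [h0, h1] using this
  · rintro ⟨htf, hx, hy⟩
    obtain ⟨hsx, hsy, hsd⟩ := hs
    obtain ⟨htx, hty, htd⟩ := htf
    refine ⟨fun u => ((1-u)*s.1 + u*t.1, (1-u)*s.2 + u*t.2), ?_, ?_, ?_, ?_, ?_, ?_⟩
    · exact (Continuous.prodMk (by fun_prop) (by fun_prop)).continuousOn
    · intro a ha b hb hab
      dsimp only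
      nlinarith
    · intro a ha b hb hab
      dsimp only
      nlinarith
    · simp
    · simp
    · intro u hu
      obtain ⟨hu0, hu1⟩ := hu
      refine ⟨⟨?_, ?_⟩, ⟨?_, ?_⟩, ?_⟩ <;> dsimp only
      · nlinarith [hsx.1, htx.1]
      · nlinarith [hsx.2, htx.2]
      · nlinarith [hsy.1, hty.1]
      · nlinarith [hsy.2, hty.2]
      · exact l1_convex_key R B hR hB δ s.1 s.2 t.1 t.2 u hu0 hu1 hsd htd
end
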